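/- (Choi's theorem) A linear map Φ : M_p → M_q is completely positive if and only if the Choi block matrix M ∈ M_p(M_q), defined by M_{ij} = Φ(E_{ij}) for 1 ≤ i,j ≤ p, is positive semidefinite, where E_{ij} are the matrix units of M_p. -/

import Mathlib

open Matrix

/-- Blockwise application of a map `Φ : M_p → M_q` to an `n × n` block matrix. -/
noncomputable def blockMap (p q n : ℕ)
    (Φ : Matrix (Fin p) (Fin p) ℝ → Matrix (Fin q) (Fin q) ℝ)
    (M : Matrix (Fin n × Fin p) (Fin n × Fin p) ℝ) :
    Matrix (Fin n × Fin q) (Fin n × Fin q) ℝ :=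
  Matrix.of fun a b => Φ (Matrix.of fun i j => M (a.1, i) (b.1, j)) a.2 b.2

/-- Complete positivity of `Φ : M_p → M_q`. -/
def IsCompletelyPositive (p q : ℕ)
    (Φ : Matrix (Fin p) (Fin p) ℝ → Matrix (Fin q) (Fin q) ℝ) : Prop :=
  ∀ n : ℕ, ∀ M : Matrix (Fin n × Fin p) (Fin n × Fin p) ℝ,
    M.PosSemidef → (blockMap p q n Φ M).PosSemidef

/-- The Choi matrix of `Φ : M_p → M_q`: the `pq × pq` block matrix whose `(i,j)`
block is `Φ(E_{ij})`, `E_{ij}` being the matrix units of `M_p`. -/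
noncomputable def choiMatrix (p q : ℕ)
    (Φ : Matrix (Fin p) (Fin p) ℝ → Matrix (Fin q) (Fin q) ℝ) :
    Matrix (Fin p × Fin q) (Fin p × Fin q) ℝ :=
  Matrix.of fun a b => Φ (Matrix.single a.1 b.1 1) a.2 b.2

/-!
Applying complete positivity to the rank-one positive matrix `vec(I) vec(I)ᵀ = [E_{ij}]_{ij}`
produces exactly the Choi matrix `C`. Conversely, every positive `M` is a sum of rank-one
matrices `v vᵀ`, and for linear `Φ` the blockwise image of `v vᵀ` is the congruence
`(V ⊗ I) C (V ⊗ I)ᵀ`, where `V` is `v` reshaped to an `n × p` matrix; so it is positive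
whenever `C` is.
-/

open scoped Kronecker

theorem IsLinearMap.apply_eq_sum_single {R m n M : Type*} [CommSemiring R] [Fintype m]
    [Fintype n] [DecidableEq m] [DecidableEq n] [AddCommMonoid M] [Module R M]
    {Φ : Matrix m n R → M} (hΦ : IsLinearMap R Φ) (A : Matrix m n R) :
    Φ A = ∑ i, ∑ j, A i j • Φ (single i j 1) := by
  let L := IsLinearMap.mk' Φ hΦ
  change L A = ∑ i, ∑ j, A i j • L (single i j 1)
  conv_lhs => rw [matrix_eq_sum_single A]
  simp only [map_sum, ← L.map_smul, smul_single, smul_eq_mul, mul_one]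

section

variable {p q n : ℕ} {Φ : Matrix (Fin p) (Fin p) ℝ → Matrix (Fin q) (Fin q) ℝ}

theorem blockMap_apply_eq_sum (hΦ : IsLinearMap ℝ Φ)
    (M : Matrix (Fin n × Fin p) (Fin n × Fin p) ℝ) (a b : Fin n) (s t : Fin q) :
    blockMap p q n Φ M (a, s) (b, t) =
      ∑ i, ∑ j, M (a, i) (b, j) * choiMatrix p q Φ (i, s) (j, t) := by
  rw [blockMap, of_apply, hΦ.apply_eq_sum_single]
  simp only [choiMatrix, of_apply, Matrix.sum_apply, Matrix.smul_apply, smul_eq_mul]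

theorem blockMap_sum (hΦ : IsLinearMap ℝ Φ) {ι : Type*} (S : Finset ι)
    (M : ι → Matrix (Fin n × Fin p) (Fin n × Fin p) ℝ) :
    blockMap p q n Φ (∑ k ∈ S, M k) = ∑ k ∈ S, blockMap p q n Φ (M k) := by
  ext ⟨a, s⟩ ⟨b, t⟩
  simp only [blockMap_apply_eq_sum hΦ, Matrix.sum_apply, Finset.sum_mul]
  exact (Finset.sum_congr rfl fun _ _ => Finset.sum_comm).trans Finset.sum_comm

theorem blockMap_vecMulVec (hΦ : IsLinearMap ℝ Φ) (v : Fin n × Fin p → ℝ) :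
    blockMap p q n Φ (vecMulVec v (star v)) =
      (of (Function.curry v) ⊗ₖ (1 : Matrix (Fin q) (Fin q) ℝ)) * choiMatrix p q Φ *
        (of (Function.curry v) ⊗ₖ (1 : Matrix (Fin q) (Fin q) ℝ))ᴴ := by
  ext ⟨a, s⟩ ⟨b, t⟩
  simp only [star_trivial, blockMap_apply_eq_sum hΦ, vecMulVec_apply,
    conjTranspose_eq_transpose_of_trivial, mul_apply, kroneckerMap_apply, of_apply,
    Function.curry_apply, one_apply, mul_ite, mul_one, mul_zero, ite_mul, zero_mul,
    Fintype.sum_prod_type, Finset.sum_ite_eq, Finset.mem_univ, ↓reduceIte, transpose_apply,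
    Finset.sum_mul]
  rw [Finset.sum_comm]
  exact Fintype.sum_congr _ _ fun i => Fintype.sum_congr _ _ fun j => by ring

theorem choiMatrix_eq_blockMap :
    choiMatrix p q Φ = blockMap p q p Φ
      (vecMulVec (fun x => (1 : Matrix (Fin p) (Fin p) ℝ) x.1 x.2)
        (star fun x => (1 : Matrix (Fin p) (Fin p) ℝ) x.1 x.2)) := by
  ext ⟨a, s⟩ ⟨b, t⟩
  simp only [choiMatrix, blockMap, of_apply]
  congr 2
  ext i j
  simp [single_eq_single_vecMulVec_single, vecMulVec_apply, one_eq_pi_single]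

end

/-- (Choi's theorem.)  A linear map `Φ : M_p → M_q` is completely positive iff its
Choi matrix `[Φ(E_{ij})]_{ij}` is positive semidefinite. -/
theorem choi_theorem (p q : ℕ)
    (Φ : Matrix (Fin p) (Fin p) ℝ → Matrix (Fin q) (Fin q) ℝ)
    (hΦ : IsLinearMap ℝ Φ) :
    IsCompletelyPositive p q Φ ↔ (choiMatrix p q Φ).PosSemidef := by
  refine ⟨fun hCP => ?_, fun hC n M hM => ?_⟩
  · rw [choiMatrix_eq_blockMap]
    exact hCP p _ (posSemidef_vecMulVec_self_star _)
  · obtain ⟨m, v, rfl⟩ := posSemidef_iff_eq_sum_vecMulVec.mp hM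
    rw [blockMap_sum hΦ]
    refine posSemidef_sum _ fun k _ => ?_
    rw [blockMap_vecMulVec hΦ]
    exact hC.mul_mul_conjTranspose_same _
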